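/- cov(𝒩) ≤ 𝔞(𝒩_T): if ℱ ⊆ 𝒩_T is a pairwise almost disjoint family of cardinality less than cov(𝒩), then some branch B(f) ∈ 𝒩_T is almost disjoint from every member of ℱ, so ℱ is not mad in 𝒩_T. -/

import Mathlib

open Cardinal Set

/-- The full binary tree `T = 2^{<ω}`, modeled as finite lists of booleans;
`s ≤ t` iff `t` is a prefix of `s` (i.e. `s` extends `t`). -/
abbrev BinTree := List Bool

/-- The restriction `f↾n ∈ 2^{<ω}` of `f ∈ 2^ω`. -/
def restr (f : ℕ → Bool) (n : ℕ) : BinTree := List.ofFn (fun i : Fin n => f i)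

/-- The branch `B(f) = { f↾n : n ∈ ω }` induced by `f ∈ 2^ω`. -/
def branch (f : ℕ → Bool) : Set BinTree := Set.range (restr f)

/-- `⌊X⌋ = { f ∈ 2^ω : |B(f) ∩ X| = ℵ₀ }`. -/
def floorSet (X : Set BinTree) : Set (ℕ → Bool) := {f | (branch f ∩ X).Infinite}

/-- `X` is covered by finitely many branches of `T`. -/
def CoveredByFinitelyManyBranches (X : Set BinTree) : Prop :=
  ∃ s : Finset (ℕ → Bool), X ⊆ ⋃ f ∈ s, branch f

/-- `X` contains no infinite antichain (w.r.t. the prefix/extension order on `T`). -/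
def NoInfiniteAntichain (X : Set BinTree) : Prop :=
  ¬ ∃ A ⊆ X, A.Infinite ∧ IsAntichain (· <+: ·) A

/-- The class `ℬ_T` of infinite subsets of `T` containing no infinite antichain. -/
def Bclass : Set (Set BinTree) := { X | X.Infinite ∧ NoInfiniteAntichain X }

/-- The class `𝒜_T` of infinite antichains of `T`. -/
def Aclass : Set (Set BinTree) := { X | X.Infinite ∧ IsAntichain (· <+: ·) X }

/-- The class `𝒩𝒟_T` of infinite `X ⊆ T` with `⌊X⌋` nowhere dense in Cantor space. -/
def NDclass : Set (Set BinTree) := { X | X.Infinite ∧ IsNowhereDense (floorSet X) }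

/-- `σ` is the standard fair-coin product measure on `2^ω`, characterized as a
probability measure giving each basic clopen set `{ f : f↾ℓ(t) = t }` measure `2^{-ℓ(t)}`. -/
def IsCantorMeasure (σ : MeasureTheory.Measure (ℕ → Bool)) : Prop :=
  MeasureTheory.IsProbabilityMeasure σ ∧
    ∀ t : BinTree, σ { f | restr f t.length = t } = (2 : ENNReal)⁻¹ ^ t.length

/-- The class `𝒩_T` (w.r.t. a measure `σ` on `2^ω`) of infinite `X ⊆ T` with `σ(⌊X⌋) = 0`. -/
def Nclass (σ : MeasureTheory.Measure (ℕ → Bool)) : Set (Set BinTree) :=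
  { X | X.Infinite ∧ σ (floorSet X) = 0 }

/-- Pairwise almost disjoint family of infinite sets. -/
def ADFamily {α : Type*} (F : Set (Set α)) : Prop :=
  (∀ X ∈ F, X.Infinite) ∧ F.Pairwise fun X Y => (X ∩ Y).Finite

/-- `F` is a maximal almost disjoint family within `𝒳`. -/
def MadIn {α : Type*} (𝒳 F : Set (Set α)) : Prop :=
  F ⊆ 𝒳 ∧ ADFamily F ∧ ∀ Y ∈ 𝒳, ∃ X ∈ F, (Y ∩ X).Infinite

/-- The collection `[α]^{ℵ₀}` of all infinite subsets of `α`. -/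
def infSets (α : Type*) : Set (Set α) := { X | X.Infinite }

/-- `𝔞(𝒳)`: the least cardinality of an infinite mad family within `𝒳`. -/
noncomputable def aInv {α : Type*} (𝒳 : Set (Set α)) : Cardinal :=
  sInf { c : Cardinal | ∃ F, F.Infinite ∧ MadIn 𝒳 F ∧ #F = c }

/-- `cov(ℳ)`: the least number of meager subsets of `2^ω` covering `2^ω`. -/
noncomputable def covMeager : Cardinal :=
  sInf { c : Cardinal | ∃ S : Set (Set (ℕ → Bool)),
    (∀ A ∈ S, IsMeagre A) ∧ ⋃₀ S = Set.univ ∧ #S = c }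

/-- `cov(𝒩)`: the least number of `σ`-null subsets of `2^ω` covering `2^ω`. -/
noncomputable def covNull (σ : MeasureTheory.Measure (ℕ → Bool)) : Cardinal :=
  sInf { c : Cardinal | ∃ S : Set (Set (ℕ → Bool)),
    (∀ A ∈ S, σ A = 0) ∧ ⋃₀ S = Set.univ ∧ #S = c }

/-- `F^⊥`: the family of infinite sets almost disjoint from every member of `F`. -/
def perp {α : Type*} (F : Set (Set α)) : Set (Set α) :=
  { Y | Y.Infinite ∧ ∀ X ∈ F, (Y ∩ X).Finite }

/-- Membership in the ideal `ℐ(G)` generated by `G` together with the finite sets: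
`S ⊆* ∪G'` for some finite `G' ⊆ G`. -/
def InIdeal {α : Type*} (G : Set (Set α)) (S : Set α) : Prop :=
  ∃ G' : Finset (Set α), ↑G' ⊆ G ∧ (S \ ⋃₀ ↑G').Finite

/-- `𝔞⁺(F) = 𝔞(F^⊥)`. -/
noncomputable def aPlus {α : Type*} (F : Set (Set α)) : Cardinal := aInv (perp F)

/-- `B` almost decides `F`: `B^⊥` is exactly the family of infinite members of
the ideal generated by `F \ B` and the finite sets. -/
def AlmostDecides {α : Type*} (B F : Set (Set α)) : Prop :=
  perp B = { Y | Y.Infinite ∧ InIdeal (F \ B) Y }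

/-- A subset `C` of a poset is centered: every finite subset of `C` has a common
lower bound. -/
def Centered {P : Type*} [Preorder P] (C : Set P) : Prop :=
  ∀ s : Finset P, ↑s ⊆ C → ∃ p, ∀ q ∈ s, p ≤ q

/-- A poset is σ-centered: it is a countable union of centered subsets. -/
def SigmaCentered (P : Type*) [Preorder P] : Prop :=
  ∃ C : ℕ → Set P, (∀ n, Centered (C n)) ∧ ⋃ n, C n = Set.univ

/-- `D` is dense (below every condition) in the poset `P`. -/
def DenseBelow {P : Type*} [Preorder P] (D : Set P) : Prop :=
  ∀ p : P, ∃ q ∈ D, q ≤ p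

/-- `G` is a filter on the poset `P`. -/
def IsFilterOn {P : Type*} [Preorder P] (G : Set P) : Prop :=
  (∀ p ∈ G, ∀ q, p ≤ q → q ∈ G) ∧ ∀ p ∈ G, ∀ q ∈ G, ∃ r ∈ G, r ≤ p ∧ r ≤ q

/-- Martin's axiom for σ-centered posets: for every nonempty σ-centered poset and
fewer than continuum many dense sets there is a filter meeting them all. -/
def MASigmaCentered : Prop :=
  ∀ (P : Type) (_ : Preorder P) (_ : Nonempty P), SigmaCentered P →
    ∀ 𝒟 : Set (Set P), #𝒟 < Cardinal.continuum → (∀ D ∈ 𝒟, DenseBelow D) →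
      ∃ G : Set P, IsFilterOn G ∧ ∀ D ∈ 𝒟, (G ∩ D).Nonempty

/-!
Each `X ∈ 𝒩_T` has `σ(⌊X⌋) = 0`, so fewer than `cov(𝒩)` members of `ℱ` leave some `f ∈ 2^ω`
outside every `⌊X⌋`; then `B(f)` meets each `X ∈ ℱ` in a finite set, and `B(f) ∈ 𝒩_T` because
`⌊B(f)⌋ = {f}` and singletons are `σ`-null. Hence every mad family in `𝒩_T` has size at least
`cov(𝒩)`. Since `sInf ∅ = 0`, the bound on `𝔞(𝒩_T)` also needs an infinite mad family in `𝒩_T`: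
the branches form an infinite ad family inside `𝒩_T`, and Zorn's lemma extends it.
-/

section AlmostDisjoint

variable {α : Type*}

theorem ADFamily.insert {F : Set (Set α)} {Y : Set α} (hF : ADFamily F) (hY : Y.Infinite)
    (hYF : ∀ X ∈ F, (Y ∩ X).Finite) : ADFamily (insert Y F) := by
  refine ⟨?_, ?_⟩
  · rintro X (rfl | hX)
    exacts [hY, hF.1 X hX]
  · refine Set.pairwise_insert.2 ⟨hF.2, fun X hX _ => ⟨hYF X hX, ?_⟩⟩
    simpa only [Set.inter_comm] using hYF X hX

theorem ADFamily.sUnion_of_isChain {c : Set (Set (Set α))} (hc : ∀ F ∈ c, ADFamily F)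
    (hchain : IsChain (· ⊆ ·) c) : ADFamily (⋃₀ c) := by
  refine ⟨fun X ⟨F, hF, hX⟩ => (hc F hF).1 X hX, ?_⟩
  rintro X ⟨F, hF, hX⟩ Y ⟨G, hG, hY⟩ hXY
  rcases hchain.total hF hG with hFG | hGF
  · exact (hc G hG).2 (hFG hX) hY hXY
  · exact (hc F hF).2 hX (hGF hY) hXY

theorem ADFamily.exists_madIn_superset {𝒳 F₀ : Set (Set α)} (h𝒳 : ∀ Y ∈ 𝒳, Y.Infinite)
    (hF₀𝒳 : F₀ ⊆ 𝒳) (hF₀ : ADFamily F₀) : ∃ M, F₀ ⊆ M ∧ MadIn 𝒳 M := by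
  obtain ⟨M, hF₀M, ⟨hM𝒳, hM⟩, hMmax⟩ :=
    zorn_subset_nonempty {F | F ⊆ 𝒳 ∧ ADFamily F}
      (fun c hc hchain _ => ⟨⋃₀ c, ⟨Set.sUnion_subset fun F hF => (hc hF).1,
        ADFamily.sUnion_of_isChain (fun F hF => (hc hF).2) hchain⟩,
        fun _ => Set.subset_sUnion_of_mem⟩)
      F₀ ⟨hF₀𝒳, hF₀⟩
  refine ⟨M, hF₀M, hM𝒳, hM, fun Y hY => ?_⟩
  by_contra! hYM
  have hYinM : Y ∈ M :=
    hMmax ⟨Set.insert_subset hY hM𝒳, hM.insert (h𝒳 Y hY) hYM⟩ (Set.subset_insert Y M)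
      (Set.mem_insert Y M)
  exact h𝒳 Y hY (by simpa only [Set.inter_self] using hYM Y hYinM)

end AlmostDisjoint

section Branches

theorem restr_length (f : ℕ → Bool) (n : ℕ) : (restr f n).length = n :=
  List.length_ofFn

theorem restr_injective (f : ℕ → Bool) : Function.Injective (restr f) := fun n m h => by
  simpa only [restr_length] using congrArg List.length h

theorem restr_eq_restr_iff {f g : ℕ → Bool} {n : ℕ} :
    restr f n = restr g n ↔ ∀ i < n, f i = g i := by
  simp only [restr, List.ofFn_inj, funext_iff]
  exact ⟨fun h i hi => h ⟨i, hi⟩, fun h i => h i i.isLt⟩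

theorem branch_infinite (f : ℕ → Bool) : (branch f).Infinite :=
  Set.infinite_range_of_injective (restr_injective f)

/-- Two distinct branches share only the restrictions of length at most the first index where
`f` and `g` differ. -/
theorem branch_inter_branch_finite {f g : ℕ → Bool} (hfg : f ≠ g) :
    (branch f ∩ branch g).Finite := by
  obtain ⟨n, hn⟩ := Function.ne_iff.1 hfg
  refine ((Set.finite_Iic n).image (restr f)).subset ?_
  rintro _ ⟨⟨k, rfl⟩, ⟨m, hm⟩⟩
  obtain rfl : m = k := by simpa only [restr_length] using congrArg List.length hm
  refine ⟨m, Set.mem_Iic.2 (not_lt.1 fun hnm => hn ?_), rfl⟩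
  exact (restr_eq_restr_iff.1 hm n hnm).symm

theorem branch_injective : Function.Injective branch := fun f g h => by
  by_contra hfg
  exact branch_infinite g (by simpa only [h, Set.inter_self] using branch_inter_branch_finite hfg)

theorem adFamily_range_branch : ADFamily (Set.range branch) :=
  ⟨Set.forall_mem_range.2 branch_infinite, Set.forall_mem_range.2 fun _ =>
    Set.forall_mem_range.2 fun _ hne => branch_inter_branch_finite fun h => hne (congrArg _ h)⟩

theorem floorSet_branch_subset (f : ℕ → Bool) : floorSet (branch f) ⊆ {f} := fun g hg => by
  by_contra hgf
  exact hg (branch_inter_branch_finite hgf)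

end Branches

section CantorMeasure

open MeasureTheory

variable {σ : MeasureTheory.Measure (ℕ → Bool)}

theorem IsCantorMeasure.measure_singleton (hσ : IsCantorMeasure σ) (g : ℕ → Bool) :
    σ {g} = 0 := by
  have hle : ∀ n : ℕ, σ {g} ≤ (2 : ENNReal)⁻¹ ^ n := fun n =>
    calc σ {g} ≤ σ {f | restr f (restr g n).length = restr g n} :=
          measure_mono (Set.singleton_subset_iff.2 (congrArg (restr g) (restr_length g n)))
      _ = (2 : ENNReal)⁻¹ ^ n := by rw [hσ.2, restr_length]
  have hlim : Filter.Tendsto (fun n : ℕ => (2 : ENNReal)⁻¹ ^ n) Filter.atTop (nhds 0) :=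
    ENNReal.tendsto_pow_atTop_nhds_zero_of_lt_one (by simp [ENNReal.inv_lt_one])
  exact le_antisymm (ge_of_tendsto' hlim hle) zero_le

theorem IsCantorMeasure.branch_mem_nclass (hσ : IsCantorMeasure σ) (f : ℕ → Bool) :
    branch f ∈ Nclass σ :=
  ⟨branch_infinite f, measure_mono_null (floorSet_branch_subset f) (hσ.measure_singleton f)⟩

end CantorMeasure

section Covering

variable {σ : MeasureTheory.Measure (ℕ → Bool)}

theorem sUnion_ne_univ_of_mk_lt_covNull {S : Set (Set (ℕ → Bool))} (hS : ∀ A ∈ S, σ A = 0)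
    (hlt : #S < covNull σ) : ⋃₀ S ≠ Set.univ := fun hcover =>
  (show covNull σ ≤ #S from csInf_le' ⟨S, hS, hcover, rfl⟩).not_gt hlt

theorem exists_forall_branch_inter_finite {F : Set (Set BinTree)} (hF : F ⊆ Nclass σ)
    (hlt : #F < covNull σ) : ∃ f : ℕ → Bool, ∀ X ∈ F, (branch f ∩ X).Finite := by
  have hnull : ∀ A ∈ floorSet '' F, σ A = 0 := Set.forall_mem_image.2 fun X hX => (hF hX).2
  obtain ⟨f, hf⟩ := Set.ne_univ_iff_exists_notMem _ |>.1 <|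
    sUnion_ne_univ_of_mk_lt_covNull hnull (Cardinal.mk_image_le.trans_lt hlt)
  exact ⟨f, fun X hX => Set.not_infinite.1 fun hinf => hf ⟨floorSet X, ⟨X, hX, rfl⟩, hinf⟩⟩

theorem covNull_le_mk_of_madIn (hσ : IsCantorMeasure σ) {F : Set (Set BinTree)}
    (hF : MadIn (Nclass σ) F) : covNull σ ≤ #F := by
  by_contra! hlt
  obtain ⟨f, hf⟩ := exists_forall_branch_inter_finite hF.1 hlt
  obtain ⟨X, hX, hinf⟩ := hF.2.2 (branch f) (hσ.branch_mem_nclass f)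
  exact hinf (hf X hX)

theorem exists_infinite_madIn_nclass (hσ : IsCantorMeasure σ) :
    ∃ F : Set (Set BinTree), F.Infinite ∧ MadIn (Nclass σ) F := by
  obtain ⟨M, hbranchM, hM⟩ := adFamily_range_branch.exists_madIn_superset (fun _ hY => hY.1)
    (Set.range_subset_iff.2 hσ.branch_mem_nclass)
  exact ⟨M, (Set.infinite_range_of_injective branch_injective).mono hbranchM, hM⟩

end Covering

/-- `cov(𝒩) ≤ 𝔞(𝒩_T)`: an ad family in `𝒩_T` of size `< cov(𝒩)` is not mad in `𝒩_T`,
as witnessed by a branch. -/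
theorem stmt9 (σ : MeasureTheory.Measure (ℕ → Bool)) (hσ : IsCantorMeasure σ) :
    covNull σ ≤ aInv (Nclass σ) ∧
    ∀ F : Set (Set BinTree), F ⊆ Nclass σ → ADFamily F → #F < covNull σ →
      ∃ f : ℕ → Bool, branch f ∈ Nclass σ ∧ ∀ X ∈ F, (branch f ∩ X).Finite := by
  refine ⟨?_, fun F hF _ hlt => ?_⟩
  · obtain ⟨F, hFinf, hFmad⟩ := exists_infinite_madIn_nclass hσ
    exact le_csInf ⟨#F, F, hFinf, hFmad, rfl⟩ fun _ ⟨G, _, hGmad, hG⟩ =>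
      hG ▸ covNull_le_mk_of_madIn hσ hGmad
  · obtain ⟨f, hf⟩ := exists_forall_branch_inter_finite hF hlt
    exact ⟨f, hσ.branch_mem_nclass f, hf⟩
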